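/- arXiv:1109.4501 — 2 statements merged into one kernel-verified Lean document; each statement's English description precedes it below -/
import Mathlib

section
/- There exist at most ⌊N²/4⌋ + 1 linearly independent pairwise commuting N×N matrices over a field; i.e., any commutative Lie subalgebra of gl(N) has dimension at most ⌊N²/4⌋ + 1. -/
/-!
After extending scalars to the algebraic closure, the matrices generate a commutative subalgebra
`S` of `End V` containing them, so it suffices to bound `dim S`. Pick `v` whose orbit `W = S v`
has maximal dimension `k`, and let `A ∈ S` kill `v`. If `A u ∉ W` for some `u`, then for generic
`t` the orbit of `v + t u` would contain a basis of `W` perturbed by `t`, together with `A u`,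
contradicting maximality; so `A V ⊆ W`. By commutativity `A W = 0`, and `A V` meets `K v` only
in `0`: if `A u = v`, then `A` maps `S u` onto a space containing `W` while killing `v ∈ S u`,
so `S u` would be larger than `W`. Hence `A ↦ (u + W ↦ A u + K v)` embeds the annihilator of `v` into
`Hom(V / W, W / K v)`, and `dim S ≤ k + (n - k)(k - 1) ≤ n² / 4 + 1`.
-/

open Module Submodule

section

variable {K M N ι : Type*} [Field K] [AddCommGroup M] [Module K M] [AddCommGroup N] [Module K N]

theorem LinearMap.finite_setOf_not_injective_add_smul [FiniteDimensional K M]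
    (f g : M →ₗ[K] N) (hf : Function.Injective f) :
    {t : K | ¬ Function.Injective (f + t • g)}.Finite := by
  obtain ⟨P, hP⟩ := f.exists_leftInverse_of_injective (LinearMap.ker_eq_bot.mpr hf)
  refine ((End.finite_hasEigenvalue (P ∘ₗ g)).image fun μ => -μ⁻¹).subset fun t ht => ?_
  obtain ⟨x, hx, hx0⟩ : ∃ x, (f + t • g) x = 0 ∧ x ≠ 0 := by
    simpa [injective_iff_map_eq_zero, not_forall] using ht
  -- applying the left inverse `P` turns `f x + t • g x = 0` into an eigenvalue equation
  have hPx : x + t • P (g x) = 0 := by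
    simpa [← LinearMap.comp_apply P f, hP] using congrArg P hx
  have ht0 : t ≠ 0 := by rintro rfl; simp_all
  refine ⟨-t⁻¹, End.hasEigenvalue_of_hasEigenvector
    (End.hasEigenvector_iff.mpr ⟨End.mem_eigenspace_iff.mpr ?_, hx0⟩), by simp⟩
  rw [LinearMap.comp_apply, neg_smul, eq_neg_iff_add_eq_zero, ← smul_right_inj ht0,
    smul_add, smul_smul, mul_inv_cancel₀ ht0, one_smul, smul_zero, add_comm, hPx]

theorem LinearIndependent.exists_ne_zero_add_smul [Infinite K] [Fintype ι]
    {a : ι → M} (b : ι → M) (ha : LinearIndependent K a) :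
    ∃ t : K, t ≠ 0 ∧ LinearIndependent K (a + t • b) := by
  simp_rw [linearIndependent_iff_injective_fintypeLinearCombination] at ha ⊢
  have hlin : ∀ t : K, Fintype.linearCombination K (a + t • b) =
      Fintype.linearCombination K a + t • Fintype.linearCombination K b := by
    intro t; ext c; simp [Fintype.linearCombination_apply, Finset.sum_add_distrib,
      Finset.smul_sum, smul_comm t]
  obtain ⟨t, -, ht⟩ := Set.infinite_univ.exists_notMem_finite
    ((LinearMap.finite_setOf_not_injective_add_smul _ (Fintype.linearCombination K b) ha).union
      (Set.finite_singleton 0))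
  simp only [Set.mem_union, Set.mem_ofPred_eq, Set.mem_singleton_iff, not_or, not_not] at ht
  exact ⟨t, ht.2, hlin t ▸ ht.1⟩

end

theorem Nat.add_mul_pred_le_sq_div_four_add_one {k n : ℕ} (hk : k ≤ n) :
    k + (n - k) * (k - 1) ≤ n ^ 2 / 4 + 1 := by
  rcases k with _ | b
  · simp
  obtain ⟨a, rfl⟩ : ∃ a, n = b + 1 + a := ⟨n - (b + 1), by omega⟩
  simp only [Nat.add_sub_cancel_left, Nat.add_sub_cancel]
  -- AM-GM for the factors `n - k + 1` and `k - 1`, whose sum is `n`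
  have h : (a * b + b) * 4 ≤ (b + 1 + a) ^ 2 := by
    zify; nlinarith [sq_nonneg ((a : ℤ) + 1 - b)]
  linarith [(Nat.le_div_iff_mul_le (by norm_num)).mpr h]

namespace Subalgebra

variable {K V : Type*} [Field K] [AddCommGroup V] [Module K V]
  (S : Subalgebra K (Module.End K V))

noncomputable def evalAt (v : V) : toSubmodule S →ₗ[K] V :=
  (LinearMap.applyₗ v).domRestrict (toSubmodule S)

@[simp]
theorem evalAt_apply (v : V) (A : toSubmodule S) : S.evalAt v A = (A : Module.End K V) v := rfl

noncomputable def orbit (v : V) : Submodule K V := LinearMap.range (S.evalAt v)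

theorem mem_orbit {v x : V} : x ∈ S.orbit v ↔ ∃ A ∈ S, A v = x := by
  simp [orbit]

theorem mem_orbit_self (v : V) : v ∈ S.orbit v := S.mem_orbit.mpr ⟨1, S.one_mem, rfl⟩

theorem orbit_zero : S.orbit 0 = ⊥ := by
  simp [eq_bot_iff, SetLike.le_def, mem_orbit]

def HasMaxOrbit (v : V) : Prop := ∀ u, finrank K (S.orbit u) ≤ finrank K (S.orbit v)

theorem exists_hasMaxOrbit [FiniteDimensional K V] : ∃ v, S.HasMaxOrbit v := by
  have hbdd : BddAbove (Set.range fun u => finrank K (S.orbit u)) :=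
    ⟨finrank K V, by rintro _ ⟨u, rfl⟩; exact Submodule.finrank_le _⟩
  obtain ⟨v, hv⟩ := Nat.sSup_mem (Set.range_nonempty _) hbdd
  exact ⟨v, fun u => (le_csSup hbdd ⟨u, rfl⟩).trans_eq hv.symm⟩

variable {S}

theorem apply_mem_orbit_of_apply_eq_zero [Infinite K] [FiniteDimensional K V] {v : V}
    (hv : S.HasMaxOrbit v) {A : Module.End K V} (hA : A ∈ S) (hAv : A v = 0) (u : V) :
    A u ∈ S.orbit v := by
  by_contra hu
  set W := S.orbit v
  let bW := Module.finBasis K W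
  choose B hBS hB using fun i => S.mem_orbit.mp (bW i).2
  let a : Fin (finrank K W + 1) → V := Fin.snoc (fun i => (bW i : V)) (A u)
  let b : Fin (finrank K W + 1) → V := Fin.snoc (fun i => B i u) 0
  have ha : LinearIndependent K a := by
    refine linearIndependent_finSnoc.mpr ⟨bW.linearIndependent.map' W.subtype W.ker_subtype, ?_⟩
    rwa [show (fun i => (bW i : V)) = W.subtype ∘ bW from rfl, Set.range_comp, span_image,
      bW.span_eq, Submodule.map_top, range_subtype]
  obtain ⟨t, ht, hli⟩ := ha.exists_ne_zero_add_smul b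
  -- `B i` maps `v + t • u` to `bW i + t • B i u`, and `t⁻¹ • A` maps it to `A u`
  have hmem : ∀ i, (a + t • b) i ∈ S.orbit (v + t • u) := by
    refine Fin.lastCases (S.mem_orbit.mpr ⟨t⁻¹ • A, S.smul_mem hA _, ?_⟩)
      fun i => S.mem_orbit.mpr ⟨B i, hBS i, ?_⟩
    · simp [a, b, hAv, smul_smul, inv_mul_cancel₀ ht]
    · simp [a, b, hB]
  have hle := Submodule.finrank_mono (span_le.mpr (Set.range_subset_iff.mpr hmem))
  rw [finrank_span_eq_card hli, Fintype.card_fin] at hle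
  exact Nat.not_succ_le_self _ (hle.trans (hv _))

theorem apply_eq_zero_of_mem_orbit [IsMulCommutative S] {v w : V} {A : Module.End K V}
    (hA : A ∈ S) (hAv : A v = 0) (hw : w ∈ S.orbit v) : A w = 0 := by
  obtain ⟨B, hB, rfl⟩ := S.mem_orbit.mp hw
  rw [← Module.End.mul_apply, setLike_mul_comm hA hB, Module.End.mul_apply, hAv, map_zero]

theorem apply_eq_zero_of_apply_mem_span_singleton [FiniteDimensional K V] [IsMulCommutative S]
    {v : V} (hv : S.HasMaxOrbit v) {A : Module.End K V} (hA : A ∈ S) (hAv : A v = 0) {u : V}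
    (hu : A u ∈ K ∙ v) : A u = 0 := by
  by_contra h
  obtain ⟨c, hc⟩ := mem_span_singleton.mp hu
  have hc0 : c ≠ 0 := by rintro rfl; simp_all
  have hvu : v ∈ S.orbit u :=
    S.mem_orbit.mpr ⟨c⁻¹ • A, S.smul_mem hA _, by simp [← hc, smul_smul, inv_mul_cancel₀ hc0]⟩
  -- `A` maps the orbit of `u` onto a space containing the orbit of `v`, and kills `v ≠ 0`,
  -- so the orbit of `u` would be strictly larger than that of `v`
  have hle : S.orbit v ≤ (S.orbit u).map A := by
    intro w hw
    obtain ⟨B, hB, rfl⟩ := S.mem_orbit.mp hw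
    refine ⟨c⁻¹ • B u, S.mem_orbit.mpr ⟨c⁻¹ • B, S.smul_mem hB _, rfl⟩, ?_⟩
    rw [map_smul, ← Module.End.mul_apply, setLike_mul_comm hA hB, Module.End.mul_apply, ← hc,
      map_smul, smul_smul, inv_mul_cancel₀ hc0, one_smul]
  have hv0 : v ≠ 0 := by rintro rfl; simp_all
  have hker : 0 < finrank K (LinearMap.ker (A.domRestrict (S.orbit u))) :=
    finrank_pos_iff_exists_ne_zero.mpr ⟨⟨⟨v, hvu⟩, by simp [hAv]⟩, by simpa using hv0⟩
  have hrank := LinearMap.finrank_range_add_finrank_ker (A.domRestrict (S.orbit u))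
  rw [LinearMap.range_domRestrict] at hrank
  have := Submodule.finrank_mono hle
  have := hv u
  omega

variable [Infinite K] [FiniteDimensional K V] [IsMulCommutative S] {v : V}

noncomputable def kerEvalAtToHom (hv : S.HasMaxOrbit v) :
    LinearMap.ker (S.evalAt v) →ₗ[K]
      (V ⧸ S.orbit v →ₗ[K] S.orbit v ⧸ K ∙ (⟨v, S.mem_orbit_self v⟩ : S.orbit v)) where
  toFun A := (S.orbit v).mapQ _
    ((A : Module.End K V).codRestrict _
      (apply_mem_orbit_of_apply_eq_zero hv A.1.2 (LinearMap.mem_ker.mp A.2)))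
    fun w hw => by
      rw [Submodule.mem_comap, show (A : Module.End K V).codRestrict _ _ w = 0 from
        Subtype.ext (apply_eq_zero_of_mem_orbit A.1.2 (LinearMap.mem_ker.mp A.2) hw)]
      exact zero_mem _
  map_add' _ _ := by ext; rfl
  map_smul' _ _ := by ext; rfl

theorem kerEvalAtToHom_injective (hv : S.HasMaxOrbit v) :
    Function.Injective (kerEvalAtToHom hv) := by
  refine (injective_iff_map_eq_zero _).mpr fun A hA => ?_
  ext u
  have hu : (A : Module.End K V) u ∈ K ∙ v := by
    obtain ⟨c, hc⟩ := mem_span_singleton.mp <| (Submodule.Quotient.mk_eq_zero _).mp <|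
      LinearMap.congr_fun hA (Submodule.Quotient.mk u)
    exact mem_span_singleton.mpr ⟨c, congrArg Subtype.val hc⟩
  simpa using apply_eq_zero_of_apply_mem_span_singleton hv A.1.2 (LinearMap.mem_ker.mp A.2) hu

theorem finrank_ker_evalAt_le (hv : S.HasMaxOrbit v) :
    finrank K (LinearMap.ker (S.evalAt v)) ≤
      (finrank K V - finrank K (S.orbit v)) * (finrank K (S.orbit v) - 1) := by
  have hquot : finrank K (S.orbit v ⧸ K ∙ (⟨v, S.mem_orbit_self v⟩ : S.orbit v)) ≤
      finrank K (S.orbit v) - 1 := by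
    have := Submodule.finrank_quotient_add_finrank (K ∙ (⟨v, S.mem_orbit_self v⟩ : S.orbit v))
    rcases eq_or_ne v 0 with rfl | hv0
    · have : finrank K (S.orbit 0) = 0 := by rw [orbit_zero]; exact _root_.finrank_bot K V
      omega
    · rw [finrank_span_singleton (by simpa [Subtype.ext_iff] using hv0)] at this
      omega
  have h := LinearMap.finrank_le_finrank_of_injective (kerEvalAtToHom_injective hv)
  rw [finrank_linearMap, (S.orbit v).finrank_quotient] at h
  exact h.trans (Nat.mul_le_mul_left _ hquot)

variable (S)

theorem finrank_le_sq_div_four_add_one : finrank K S ≤ finrank K V ^ 2 / 4 + 1 := by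
  obtain ⟨v, hv⟩ := S.exists_hasMaxOrbit
  calc finrank K S = finrank K (S.orbit v) + finrank K (LinearMap.ker (S.evalAt v)) :=
        (S.evalAt v).finrank_range_add_finrank_ker.symm
    _ ≤ finrank K (S.orbit v) + (finrank K V - finrank K (S.orbit v)) *
          (finrank K (S.orbit v) - 1) := Nat.add_le_add_left (finrank_ker_evalAt_le hv) _
    _ ≤ finrank K V ^ 2 / 4 + 1 := Nat.add_mul_pred_le_sq_div_four_add_one (finrank_le _)

end Subalgebra

theorem Matrix.linearIndependent_map_algebraMap {K F m n ι : Type*} [Field K] [Field F]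
    [Algebra K F] [Finite m] [Finite n] {w : ι → Matrix m n K} (hw : LinearIndependent K w) :
    LinearIndependent F fun i => (w i).map (algebraMap K F) := by
  have h := (linearIndependent_algebraMap_comp_iff (S := F)).mpr
    (hw.map' (LinearEquiv.curry K K m n).symm.toLinearMap (LinearEquiv.ker _))
  exact h.map' (LinearEquiv.curry F F m n).toLinearMap (LinearEquiv.ker _)

theorem Matrix.finrank_le_finrank_span_map {K F m n : Type*} [Field K] [Field F] [Algebra K F]
    [Fintype m] [Fintype n] (L : Submodule K (Matrix m n K)) :
    finrank K L ≤ finrank F (span F ((fun A : Matrix m n K => A.map (algebraMap K F)) '' L)) := by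
  let b := Module.finBasis K L
  have hb : LinearIndependent K fun i => (b i : Matrix m n K) :=
    b.linearIndependent.map' L.subtype L.ker_subtype
  replace hb : LinearIndependent F fun i => (b i : Matrix m n K).map (algebraMap K F) :=
    Matrix.linearIndependent_map_algebraMap hb
  have hle : span F (Set.range fun i => (b i : Matrix m n K).map (algebraMap K F)) ≤
      span F ((fun A : Matrix m n K => A.map (algebraMap K F)) '' L) :=
    span_mono <| Set.range_subset_iff.mpr fun i => Set.mem_image_of_mem _ (b i).2
  simpa only [finrank_span_eq_card hb, Fintype.card_fin] using Submodule.finrank_mono hle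

/-- Schur's theorem: any commutative Lie subalgebra of `gl(N)`
(i.e. any linear subspace of `N × N` matrices on which all commutators vanish)
has dimension at most `⌊N²/4⌋ + 1`; equivalently, there exist at most
`⌊N²/4⌋ + 1` linearly independent pairwise commuting `N × N` matrices. -/
theorem schur_commuting_matrices_bound (N : ℕ) (K : Type*) [Field K]
    (L : Submodule K (Matrix (Fin N) (Fin N) K))
    (hcomm : ∀ A ∈ L, ∀ B ∈ L, A * B - B * A = 0) :
    Module.finrank K L ≤ N ^ 2 / 4 + 1 := by
  let F := AlgebraicClosure K
  let LF := (algebraMap K F).mapMatrix (m := Fin N) '' L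
  have hs : ∀ x ∈ Matrix.toLin' '' LF, ∀ y ∈ Matrix.toLin' '' LF, x * y = y * x := by
    rintro _ ⟨_, ⟨A, hA, rfl⟩, rfl⟩ _ ⟨_, ⟨B, hB, rfl⟩, rfl⟩
    rw [Module.End.mul_eq_comp, Module.End.mul_eq_comp, ← Matrix.toLin'_mul, ← Matrix.toLin'_mul,
      ← map_mul, ← map_mul, sub_eq_zero.mp (hcomm A hA B hB)]
  have := Algebra.isMulCommutative_adjoin F hs
  calc finrank K L ≤ finrank F (span F LF) := Matrix.finrank_le_finrank_span_map L
    _ = finrank F (span F (Matrix.toLin' '' LF)) := by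
        rw [span_image_linearEquiv, LinearEquiv.finrank_map_eq]
    _ ≤ finrank F (Algebra.adjoin F (Matrix.toLin' '' LF)) :=
        Submodule.finrank_mono (Algebra.span_le_adjoin F _)
    _ ≤ finrank F (Fin N → F) ^ 2 / 4 + 1 := Subalgebra.finrank_le_sq_div_four_add_one _
    _ = N ^ 2 / 4 + 1 := by rw [Module.finrank_fin_fun]
end

section
/- For w₁, w₂ in a Coxeter group, w₁ ≤ w₂ in the weak left Bruhat order if and only if N(w₁) ⊆ N(w₂). -/
open scoped RealInnerProductSpace

/-- Geometric data of a (finite or affine) root system with a choice of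
positive and simple roots, inside a real inner product space. -/
structure RootSystemData (V : Type*) [NormedAddCommGroup V] [InnerProductSpace ℝ V] where
  roots : Set V
  pos : Set V
  simples : Set V
  simples_sub : simples ⊆ pos
  pos_sub : pos ⊆ roots
  ne_zero : ∀ α ∈ roots, α ≠ (0 : V)
  eq_union : roots = pos ∪ (Neg.neg '' pos)
  not_both : ∀ α ∈ pos, -α ∉ pos

namespace RootSystemData

variable {V : Type*} [NormedAddCommGroup V] [InnerProductSpace ℝ V]
  [FiniteDimensional ℝ V]

/-- The orthogonal reflection in the hyperplane orthogonal to `α`. -/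
noncomputable def srefl (α : V) : V ≃ₗᵢ[ℝ] V := Submodule.reflection (ℝ ∙ α)ᗮ

variable (R : RootSystemData V)

/-- The root system data is geometric: simple reflections permute the
positive roots other than the corresponding simple root, and the set of
roots is stable under all reflections in roots. -/
structure IsGeometric : Prop where
  simple_perm : ∀ α ∈ R.simples, ∀ β ∈ R.pos, β ≠ α → srefl α β ∈ R.pos
  refl_stable : ∀ α ∈ R.roots, ∀ β ∈ R.roots, srefl α β ∈ R.roots
  pos_comb : ∀ α ∈ R.pos, α ∈ AddSubmonoid.closure R.simples

/-- The Weyl group: the group generated by the simple reflections. -/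
noncomputable def W : Subgroup (V ≃ₗᵢ[ℝ] V) :=
  Subgroup.closure {g | ∃ α ∈ R.simples, g = srefl α}

/-- The inversion set `N(w) = {α ∈ Δ⁺ ∣ w⁻¹ α ∈ -Δ⁺}`. -/
def N (w : V ≃ₗᵢ[ℝ] V) : Set V := {α | α ∈ R.pos ∧ w⁻¹ α ∈ Neg.neg '' R.pos}

/-- `l` is a word in the simple reflections representing `w`. -/
noncomputable def IsWord (l : List V) (w : V ≃ₗᵢ[ℝ] V) : Prop :=
  (∀ α ∈ l, α ∈ R.simples) ∧ w = (l.map srefl).prod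

/-- The length of `w` : the least length of a word in the simple reflections
representing `w`. -/
noncomputable def length (w : V ≃ₗᵢ[ℝ] V) : ℕ :=
  sInf {n | ∃ l : List V, R.IsWord l w ∧ l.length = n}

/-- A reduced expression. -/
noncomputable def IsReduced (l : List V) (w : V ≃ₗᵢ[ℝ] V) : Prop :=
  R.IsWord l w ∧ l.length = R.length w

/-- The (left) weak Bruhat order: some reduced expression of `w₁` is an
initial segment of a reduced expression of `w₂`. -/
noncomputable def weakLE (w₁ w₂ : V ≃ₗᵢ[ℝ] V) : Prop :=
  ∃ l₁ l₂ : List V, R.IsReduced l₁ w₁ ∧ R.IsReduced (l₁ ++ l₂) w₂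

end RootSystemData

open RootSystemData
open scoped RealInnerProductSpace

variable {V : Type*} [NormedAddCommGroup V] [InnerProductSpace ℝ V] [FiniteDimensional ℝ V]

/-! A simple reflection `s_α` permutes `Δ⁺ \ {α}` and sends `α` to `-α`; hence, when `α ∈ N(w)`,
`N(s_α w) = s_α (N(w) \ {α})`, so that `N(s_α w₁) ⊆ N(s_α w₂) ↔ N(w₁) ⊆ N(w₂)` whenever
`α ∈ N(w₁) ∩ N(w₂)`. The exchange property (for `β ∈ N(w)`, every word of `w` loses a letter
when multiplied by `s_β`) gives `ℓ(s_α w) = ℓ(w) - 1` for `α ∈ N(w)`, and, since `W` preserves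
the roots, `α ∈ N(w)` whenever a reduced word of `w` starts with `α`. Both implications then
follow by induction, peeling the first letter `α` off a reduced word of `w₁`. -/

namespace RootSystemData

variable {V : Type*} [NormedAddCommGroup V] [InnerProductSpace ℝ V]

@[simp] lemma srefl_apply_self (α : V) : srefl α α = -α :=
  Submodule.reflection_orthogonalComplement_singleton_eq_neg α

@[simp] lemma srefl_srefl (α β : V) : srefl α (srefl α β) = β :=
  Submodule.reflection_reflection _ β

@[simp] lemma srefl_inv (α : V) : (srefl α)⁻¹ = srefl α :=
  Submodule.reflection_inv

@[simp] lemma srefl_mul_srefl_mul (α : V) (w : V ≃ₗᵢ[ℝ] V) : srefl α * (srefl α * w) = w := by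
  rw [← mul_assoc, srefl, Submodule.reflection_mul_reflection, one_mul]

lemma srefl_inv_mul_apply (α β : V) (w : V ≃ₗᵢ[ℝ] V) :
    (srefl α * w)⁻¹ β = w⁻¹ (srefl α β) := by
  rw [mul_inv_rev, srefl_inv, LinearIsometryEquiv.coe_mul, Function.comp_apply]

lemma srefl_eq_conj (u : V ≃ₗᵢ[ℝ] V) (α : V) : srefl (u α) = u * srefl α * u⁻¹ := by
  have hK : (ℝ ∙ u α)ᗮ = (ℝ ∙ α)ᗮ.map (u.toLinearEquiv : V →ₗ[ℝ] V) := by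
    rw [Submodule.map_orthogonal_equiv, Submodule.map_span, Set.image_singleton]
    rfl
  simp only [srefl, hK, Submodule.reflection_map]
  rfl

variable {R : RootSystemData V}

lemma isWord_cons_iff {α : V} {l : List V} {w : V ≃ₗᵢ[ℝ] V} :
    R.IsWord (α :: l) w ↔ α ∈ R.simples ∧ R.IsWord l (srefl α * w) := by
  simp only [IsWord, List.mem_cons, forall_eq_or_imp, List.map_cons, List.prod_cons, and_assoc]
  refine and_congr_right fun _ => and_congr_right fun _ =>
    ⟨fun h => by rw [h, srefl_mul_srefl_mul], fun h => by rw [← h, srefl_mul_srefl_mul]⟩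

lemma IsWord.inv_apply_mem_roots (hR : R.IsGeometric) {l : List V} {w : V ≃ₗᵢ[ℝ] V}
    (hl : R.IsWord l w) {β : V} (hβ : β ∈ R.roots) : w⁻¹ β ∈ R.roots := by
  induction l generalizing w β with
  | nil => simpa [hl.2] using hβ
  | cons α l ih =>
    obtain ⟨hα, hl⟩ := isWord_cons_iff.1 hl
    have h := ih hl (hR.refl_stable α (R.pos_sub (R.simples_sub hα)) β hβ)
    rwa [srefl_inv_mul_apply, srefl_srefl] at h

lemma exists_isWord_of_mem_W {w : V ≃ₗᵢ[ℝ] V} (hw : w ∈ R.W) : ∃ l, R.IsWord l w := by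
  induction hw using Subgroup.closure_induction_left with
  | one => exact ⟨[], by simp [IsWord]⟩
  | mul_left _ hs _ _ ih | inv_mul_cancel _ hs _ _ ih =>
    obtain ⟨α, hα, rfl⟩ := hs
    obtain ⟨l, hl⟩ := ih
    exact ⟨α :: l, isWord_cons_iff.2 ⟨hα, by simpa using hl⟩⟩

lemma IsWord.length_le {l : List V} {w : V ≃ₗᵢ[ℝ] V} (hl : R.IsWord l w) : R.length w ≤ l.length :=
  Nat.sInf_le ⟨l, hl, rfl⟩

lemma IsWord.exists_isReduced {l : List V} {w : V ≃ₗᵢ[ℝ] V} (hl : R.IsWord l w) :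
    ∃ l', R.IsReduced l' w := by
  obtain ⟨l', hl', hlen⟩ := Nat.sInf_mem (s := {n | ∃ l, R.IsWord l w ∧ l.length = n})
    ⟨l.length, l, hl, rfl⟩
  exact ⟨l', hl', hlen⟩

lemma length_le_length_srefl_mul_add_one {α : V} (hα : α ∈ R.simples) {l : List V}
    {w : V ≃ₗᵢ[ℝ] V} (hl : R.IsWord l (srefl α * w)) :
    R.length w ≤ R.length (srefl α * w) + 1 := by
  obtain ⟨m, hm, hlen⟩ := hl.exists_isReduced
  simpa [hlen] using (isWord_cons_iff.2 ⟨hα, hm⟩).length_le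

lemma IsReduced.of_cons {α : V} {l : List V} {w : V ≃ₗᵢ[ℝ] V} (h : R.IsReduced (α :: l) w) :
    R.IsReduced l (srefl α * w) := by
  obtain ⟨hα, hl⟩ := isWord_cons_iff.1 h.1
  have hlen : l.length + 1 = R.length w := h.2
  have := length_le_length_srefl_mul_add_one hα hl
  exact ⟨hl, le_antisymm (by omega) hl.length_le⟩

lemma IsReduced.cons {α : V} (hα : α ∈ R.simples) {l : List V} {w : V ≃ₗᵢ[ℝ] V}
    (hl : R.IsReduced l (srefl α * w)) (hlen : R.length (srefl α * w) + 1 = R.length w) :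
    R.IsReduced (α :: l) w :=
  ⟨isWord_cons_iff.2 ⟨hα, hl.1⟩, by rw [List.length_cons, hl.2, hlen]⟩

lemma N_one : R.N 1 = ∅ := by
  refine Set.eq_empty_of_forall_notMem fun β ⟨hβ, δ, hδ, hδβ⟩ => R.not_both δ hδ ?_
  simp_all

lemma notMem_N_srefl_mul_self {α : V} {w : V ≃ₗᵢ[ℝ] V} (h : α ∈ R.N w) :
    α ∉ R.N (srefl α * w) := by
  rintro ⟨-, δ, hδ, hδα⟩
  obtain ⟨-, ε, hε, hεα⟩ := h
  rw [srefl_inv_mul_apply, srefl_apply_self, map_neg, ← hεα, neg_neg] at hδα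
  exact R.not_both δ hδ (hδα ▸ hε)

lemma mem_N_srefl_mul_self_of_notMem {α : V} (hα : α ∈ R.pos) {w : V ≃ₗᵢ[ℝ] V}
    (hroot : w⁻¹ α ∈ R.roots) (h : α ∉ R.N w) : α ∈ R.N (srefl α * w) := by
  refine ⟨hα, ?_⟩
  rw [srefl_inv_mul_apply, srefl_apply_self, map_neg]
  rcases R.eq_union ▸ hroot with hpos | hneg
  · exact ⟨_, hpos, rfl⟩
  · exact absurd ⟨hα, hneg⟩ h

lemma srefl_mem_N_srefl_mul (hR : R.IsGeometric) {α β : V} (hα : α ∈ R.simples)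
    {w : V ≃ₗᵢ[ℝ] V} (hβ : β ∈ R.N w) (hne : β ≠ α) : srefl α β ∈ R.N (srefl α * w) := by
  refine ⟨hR.simple_perm α hα β hβ.1 hne, ?_⟩
  rw [srefl_inv_mul_apply, srefl_srefl]
  exact hβ.2

lemma srefl_apply_ne_self {α β : V} (hα : α ∈ R.pos) (hβ : β ∈ R.pos) : srefl α β ≠ α := by
  intro h
  have : β = -α := by rw [← srefl_srefl α β, h, srefl_apply_self]
  exact R.not_both α hα (this ▸ hβ)

lemma N_srefl_mul_subset_iff (hR : R.IsGeometric) {α : V} (hα : α ∈ R.simples)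
    {w₁ w₂ : V ≃ₗᵢ[ℝ] V} (h₁ : α ∈ R.N w₁) (h₂ : α ∈ R.N w₂) :
    R.N (srefl α * w₁) ⊆ R.N (srefl α * w₂) ↔ R.N w₁ ⊆ R.N w₂ := by
  have hpos := R.simples_sub hα
  constructor
  · intro h β hβ
    by_cases hβα : β = α
    · exact hβα ▸ h₂
    simpa using srefl_mem_N_srefl_mul hR hα (h (srefl_mem_N_srefl_mul hR hα hβ hβα))
      (srefl_apply_ne_self hpos hβ.1)
  · intro h β hβ
    have hβα : β ≠ α := fun e => notMem_N_srefl_mul_self h₁ (e ▸ hβ)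
    have hβ₁ : srefl α β ∈ R.N w₁ := by
      simpa using srefl_mem_N_srefl_mul hR hα hβ hβα
    simpa using srefl_mem_N_srefl_mul hR hα (h hβ₁) (srefl_apply_ne_self hpos hβ.1)

theorem IsWord.exists_isWord_srefl_mul (hR : R.IsGeometric) {l : List V} {w : V ≃ₗᵢ[ℝ] V}
    (hl : R.IsWord l w) {β : V} (hβ : β ∈ R.N w) :
    ∃ l', R.IsWord l' (srefl β * w) ∧ l'.length + 1 = l.length := by
  induction l generalizing w β with
  | nil => simp [hl.2, N_one] at hβ
  | cons α l ih =>
    obtain ⟨hα, hl⟩ := isWord_cons_iff.1 hl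
    by_cases hβα : β = α
    · exact ⟨l, hβα ▸ hl, rfl⟩
    obtain ⟨l', hl', hlen⟩ := ih hl (srefl_mem_N_srefl_mul hR hα hβ hβα)
    refine ⟨α :: l', isWord_cons_iff.2 ⟨hα, ?_⟩, by simp [hlen]⟩
    -- `s_(s_α β) * s_α = s_α * s_β`
    rwa [srefl_eq_conj, srefl_inv, mul_assoc, mul_assoc, srefl_mul_srefl_mul] at hl'

lemma length_srefl_mul_add_one (hR : R.IsGeometric) {α : V} (hα : α ∈ R.simples) {l : List V}
    {w : V ≃ₗᵢ[ℝ] V} (hl : R.IsWord l w) (h : α ∈ R.N w) :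
    R.length (srefl α * w) + 1 = R.length w := by
  obtain ⟨m, hm⟩ := hl.exists_isReduced
  obtain ⟨m', hm', hlen⟩ := hm.1.exists_isWord_srefl_mul hR h
  have := hm'.length_le
  have := length_le_length_srefl_mul_add_one hα hm'
  have := hm.2
  omega

lemma IsReduced.mem_N_of_cons (hR : R.IsGeometric) {α : V} {l : List V} {w : V ≃ₗᵢ[ℝ] V}
    (h : R.IsReduced (α :: l) w) : α ∈ R.N w := by
  obtain ⟨hα, hl⟩ := isWord_cons_iff.1 h.1
  by_contra hαw
  have hroot := h.1.inv_apply_mem_roots hR (R.pos_sub (R.simples_sub hα))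
  have hlonger := length_srefl_mul_add_one hR hα hl
    (mem_N_srefl_mul_self_of_notMem (R.simples_sub hα) hroot hαw)
  rw [srefl_mul_srefl_mul] at hlonger
  have hlen : l.length + 1 = R.length w := h.2
  have := hl.length_le
  omega

theorem N_subset_N_of_weakLE (hR : R.IsGeometric) {w₁ w₂ : V ≃ₗᵢ[ℝ] V} (h : R.weakLE w₁ w₂) :
    R.N w₁ ⊆ R.N w₂ := by
  obtain ⟨l₁, l₂, h₁, h₂⟩ := h
  induction l₁ generalizing w₁ w₂ with
  | nil => simp [h₁.1.2, N_one]
  | cons α l ih =>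
    exact (N_srefl_mul_subset_iff hR (isWord_cons_iff.1 h₁.1).1 (h₁.mem_N_of_cons hR)
      (h₂.mem_N_of_cons hR)).1 (ih h₁.of_cons h₂.of_cons)

theorem weakLE_of_N_subset (hR : R.IsGeometric) {l : List V} {w₁ w₂ : V ≃ₗᵢ[ℝ] V}
    (hl : R.IsReduced l w₁) (hw₂ : w₂ ∈ R.W) (h : R.N w₁ ⊆ R.N w₂) : R.weakLE w₁ w₂ := by
  induction l generalizing w₁ w₂ with
  | nil =>
    obtain ⟨m, hm⟩ := exists_isWord_of_mem_W hw₂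
    obtain ⟨l₂, hl₂⟩ := hm.exists_isReduced
    exact ⟨[], l₂, hl, hl₂⟩
  | cons α l ih =>
    have hα := (isWord_cons_iff.1 hl.1).1
    have hα₁ : α ∈ R.N w₁ := hl.mem_N_of_cons hR
    have hα₂ : α ∈ R.N w₂ := h hα₁
    obtain ⟨m, hm⟩ := exists_isWord_of_mem_W hw₂
    obtain ⟨l₁, l₂, h₁, h₂⟩ := ih hl.of_cons
      (mul_mem (Subgroup.subset_closure ⟨α, hα, rfl⟩) hw₂)
      ((N_srefl_mul_subset_iff hR hα hα₁ hα₂).2 h)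
    exact ⟨α :: l₁, l₂, h₁.cons hα (length_srefl_mul_add_one hR hα hl.1 hα₁),
      h₂.cons hα (length_srefl_mul_add_one hR hα hm hα₂)⟩

end RootSystemData

/-- `w₁ ≤ w₂` in the weak left Bruhat order iff `N(w₁) ⊆ N(w₂)`. -/
theorem weak_order_iff_inversion_subset (R : RootSystemData V) (hR : R.IsGeometric)
    (w₁ w₂ : V ≃ₗᵢ[ℝ] V) (hw₁ : w₁ ∈ R.W) (hw₂ : w₂ ∈ R.W) :
    R.weakLE w₁ w₂ ↔ R.N w₁ ⊆ R.N w₂ := by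
  obtain ⟨l, hl⟩ := exists_isWord_of_mem_W hw₁
  obtain ⟨l₁, hl₁⟩ := hl.exists_isReduced
  exact ⟨N_subset_N_of_weakLE hR, weakLE_of_N_subset hR hl₁ hw₂⟩
end
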